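/- Welch-type lower bound for local CSC dictionaries: let P_L ∈ ℂ^{L_p × J} with J > 1 and let P be the global convolutional dictionary whose columns are all circular shifts of the unit-normalized columns of P_L embedded in ℂ^N (N ≥ 2L_p − 1). Then the mutual coherence satisfies μ(P) ≥ sqrt((J − 1) / (J(2L_p − 1) − 1)). -/

import Mathlib

open Finset Complex

lemma sum4_comm {α β : Type*} [Fintype α] [Fintype β] (f : α → α → β → β → ℂ) :
    ∑ c1 : α, ∑ c2 : α, ∑ i : β, ∑ j : β, f c1 c2 i j
      = ∑ i : β, ∑ j : β, ∑ c1 : α, ∑ c2 : α, f c1 c2 i j := by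
  calc ∑ c1 : α, ∑ c2 : α, ∑ i : β, ∑ j : β, f c1 c2 i j
      = ∑ c1 : α, ∑ i : β, ∑ c2 : α, ∑ j : β, f c1 c2 i j :=
        Finset.sum_congr rfl fun _ _ => Finset.sum_comm
    _ = ∑ i : β, ∑ c1 : α, ∑ c2 : α, ∑ j : β, f c1 c2 i j := Finset.sum_comm
    _ = ∑ i : β, ∑ c1 : α, ∑ j : β, ∑ c2 : α, f c1 c2 i j :=
        Finset.sum_congr rfl fun _ _ => Finset.sum_congr rfl fun _ _ => Finset.sum_comm
    _ = ∑ i : β, ∑ j : β, ∑ c1 : α, ∑ c2 : α, f c1 c2 i j :=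
        Finset.sum_congr rfl fun _ _ => Finset.sum_comm

lemma gram_sq_swap {α β : Type*} [Fintype α] [Fintype β] (a : α → β → ℂ) :
    ∑ c1 : α, ∑ c2 : α, ((∑ i : β, (starRingEnd ℂ) (a c1 i) * a c2 i) *
        (starRingEnd ℂ) (∑ i : β, (starRingEnd ℂ) (a c1 i) * a c2 i))
      = ∑ i : β, ∑ j : β, ((∑ c : α, a c i * (starRingEnd ℂ) (a c j)) *
        (starRingEnd ℂ) (∑ c : α, a c i * (starRingEnd ℂ) (a c j))) := by
  simp only [map_sum, map_mul, Finset.sum_mul_sum, Complex.conj_conj]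
  rw [sum4_comm]
  refine Finset.sum_congr rfl fun i _ => Finset.sum_congr rfl fun j _ => ?_
  rw [Finset.sum_comm]
  exact Finset.sum_congr rfl fun c1 _ => Finset.sum_congr rfl fun c2 _ => by ring

/-- Frame (Welch) lower bound on the total squared correlations. -/
lemma frame_bound {α β : Type*} [Fintype α] [Fintype β] [Nonempty β] (a : α → β → ℂ)
    (h : ∀ c : α, ∑ i : β, ‖a c i‖ ^ 2 = 1) :
    (Fintype.card α : ℝ) ^ 2 / (Fintype.card β : ℝ) ≤
      ∑ c1 : α, ∑ c2 : α, Complex.normSq (∑ i : β, (starRingEnd ℂ) (a c1 i) * a c2 i) := by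
  have hnsq : ∀ z : ℂ, Complex.normSq z = (z * (starRingEnd ℂ) z).re := fun z => by
    rw [Complex.mul_conj, Complex.ofReal_re]
  set g : β → ℝ := fun i => ∑ c : α, ‖a c i‖ ^ 2 with hg
  have hgsum : ∑ i : β, g i = (Fintype.card α : ℝ) := by
    rw [hg]
    rw [Finset.sum_comm]
    simp only [h]
    simp
  have hstep1 : ∑ c1 : α, ∑ c2 : α, Complex.normSq (∑ i : β, (starRingEnd ℂ) (a c1 i) * a c2 i)
      = ∑ i : β, ∑ j : β, Complex.normSq (∑ c : α, a c i * (starRingEnd ℂ) (a c j)) := by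
    simp only [hnsq, ← Complex.re_sum]
    exact congrArg Complex.re (gram_sq_swap a)
  have hdiag : ∀ i : β, Complex.normSq (∑ c : α, a c i * (starRingEnd ℂ) (a c i)) = (g i) ^ 2 := by
    intro i
    have : (∑ c : α, a c i * (starRingEnd ℂ) (a c i)) = ((g i : ℝ) : ℂ) := by
      rw [hg]
      push_cast
      refine Finset.sum_congr rfl fun c _ => ?_
      rw [Complex.mul_conj]
      norm_cast
      rw [Complex.normSq_eq_norm_sq]
    rw [this, Complex.normSq_ofReal, sq]
  have hstep2 : ∑ i : β, (g i) ^ 2 ≤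
      ∑ i : β, ∑ j : β, Complex.normSq (∑ c : α, a c i * (starRingEnd ℂ) (a c j)) := by
    refine Finset.sum_le_sum fun i _ => ?_
    rw [← hdiag i]
    exact Finset.single_le_sum
      (f := fun j => Complex.normSq (∑ c : α, a c i * (starRingEnd ℂ) (a c j)))
      (fun j _ => Complex.normSq_nonneg _) (Finset.mem_univ i)
  have hcs : (∑ i : β, g i) ^ 2 ≤ (Fintype.card β : ℝ) * ∑ i : β, (g i) ^ 2 := by
    simpa using sq_sum_le_card_mul_sum_sq (s := (Finset.univ : Finset β)) (f := g)
  rw [hstep1]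
  have hcard : (0 : ℝ) < (Fintype.card β : ℝ) := by
    exact_mod_cast Fintype.card_pos
  rw [div_le_iff₀ hcard] at *
  calc (Fintype.card α : ℝ) ^ 2 = (∑ i : β, g i) ^ 2 := by rw [hgsum]
    _ ≤ (Fintype.card β : ℝ) * ∑ i : β, (g i) ^ 2 := hcs
    _ ≤ _ := by
        rw [mul_comm]
        exact mul_le_mul_of_nonneg_right hstep2 (le_of_lt hcard)


lemma close_card {N Lp : ℕ} [NeZero N] (hLp : 0 < Lp) (hN : 2 * Lp - 1 ≤ N) (k : ZMod N) :
    (Finset.univ.filter fun l : ZMod N => (l - k).val < Lp ∨ (k - l).val < Lp).card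
      = 2 * Lp - 1 := by
  have hLpN : Lp ≤ N := le_trans (by omega) hN
  set A1 := Finset.univ.filter fun l : ZMod N => (l - k).val < Lp with hA1
  set A2 := Finset.univ.filter fun l : ZMod N => (k - l).val < Lp with hA2
  have cardA1 : A1.card = Lp := by
    have himg : A1 = Finset.image (fun m : Fin Lp => k + ((m : ℕ) : ZMod N)) Finset.univ := by
      ext l
      simp only [hA1, Finset.mem_filter, Finset.mem_univ, true_and, Finset.mem_image]
      constructor
      · intro hl
        exact ⟨⟨(l - k).val, hl⟩, by simp [ZMod.natCast_zmod_val]⟩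
      · rintro ⟨m, rfl⟩
        have : ((m : ℕ) : ZMod N) = (k + ((m : ℕ) : ZMod N)) - k := by ring
        rw [← this, ZMod.val_cast_of_lt (lt_of_lt_of_le m.2 hLpN)]
        exact m.2
    rw [himg, Finset.card_image_of_injective _ ?_, Finset.card_univ, Fintype.card_fin]
    intro m1 m2 hm
    have : ((m1 : ℕ) : ZMod N) = ((m2 : ℕ) : ZMod N) := by
      have := add_left_cancel hm
      exact this
    have := congrArg ZMod.val this
    rw [ZMod.val_cast_of_lt (lt_of_lt_of_le m1.2 hLpN),
        ZMod.val_cast_of_lt (lt_of_lt_of_le m2.2 hLpN)] at this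
    exact Fin.ext this
  have cardA2 : A2.card = Lp := by
    have himg : A2 = Finset.image (fun m : Fin Lp => k - ((m : ℕ) : ZMod N)) Finset.univ := by
      ext l
      simp only [hA2, Finset.mem_filter, Finset.mem_univ, true_and, Finset.mem_image]
      constructor
      · intro hl
        exact ⟨⟨(k - l).val, hl⟩, by simp [ZMod.natCast_zmod_val]⟩
      · rintro ⟨m, rfl⟩
        have : ((m : ℕ) : ZMod N) = k - (k - ((m : ℕ) : ZMod N)) := by ring
        rw [← this, ZMod.val_cast_of_lt (lt_of_lt_of_le m.2 hLpN)]
        exact m.2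
    rw [himg, Finset.card_image_of_injective _ ?_, Finset.card_univ, Fintype.card_fin]
    intro m1 m2 hm
    have : ((m1 : ℕ) : ZMod N) = ((m2 : ℕ) : ZMod N) := by
      have h := hm
      rwa [sub_right_inj] at h
    have := congrArg ZMod.val this
    rw [ZMod.val_cast_of_lt (lt_of_lt_of_le m1.2 hLpN),
        ZMod.val_cast_of_lt (lt_of_lt_of_le m2.2 hLpN)] at this
    exact Fin.ext this
  have hinter : A1 ∩ A2 = {k} := by
    ext l
    simp only [Finset.mem_inter, hA1, hA2, Finset.mem_filter, Finset.mem_univ, true_and,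
      Finset.mem_singleton]
    constructor
    · rintro ⟨h1, h2⟩
      by_contra hne
      have hlk : l - k ≠ 0 := sub_ne_zero.mpr hne
      have : (k - l) = -(l - k) := by ring
      rw [this, ZMod.neg_val, if_neg hlk] at h2
      have hv1 : 1 ≤ (l - k).val := Nat.one_le_iff_ne_zero.mpr (by
        intro h0
        exact hlk ((ZMod.val_eq_zero _).mp h0))
      omega
    · rintro rfl
      simp [ZMod.val_zero, hLp]
  have hfil : (Finset.univ.filter fun l : ZMod N => (l - k).val < Lp ∨ (k - l).val < Lp)
      = A1 ∪ A2 := by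
    rw [hA1, hA2, Finset.filter_or]
  rw [hfil]
  have := Finset.card_union_add_card_inter A1 A2
  rw [hinter, cardA1, cardA2, Finset.card_singleton] at this
  omega


lemma T_card {N Lp J : ℕ} [NeZero N] (hLp : 0 < Lp) (hN : 2 * Lp - 1 ≤ N) :
    (Finset.univ.filter fun p : (ZMod N × Fin J) × (ZMod N × Fin J) =>
      p.1 ≠ p.2 ∧ ((p.2.1 - p.1.1).val < Lp ∨ (p.1.1 - p.2.1).val < Lp)).card
      ≤ N * J * ((2 * Lp - 1) * J - 1) := by
  have hcardC : Fintype.card (ZMod N × Fin J) = N * J := by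
    rw [Fintype.card_prod, ZMod.card, Fintype.card_fin]
  calc (Finset.univ.filter fun p : (ZMod N × Fin J) × (ZMod N × Fin J) =>
      p.1 ≠ p.2 ∧ ((p.2.1 - p.1.1).val < Lp ∨ (p.1.1 - p.2.1).val < Lp)).card
      = ∑ c1 : ZMod N × Fin J, (Finset.univ.filter fun c2 : ZMod N × Fin J =>
          c1 ≠ c2 ∧ ((c2.1 - c1.1).val < Lp ∨ (c1.1 - c2.1).val < Lp)).card := by
        rw [Finset.card_filter, Fintype.sum_prod_type]
        exact Finset.sum_congr rfl fun c1 _ => (Finset.card_filter _ _).symm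
    _ ≤ ∑ _c1 : ZMod N × Fin J, ((2 * Lp - 1) * J - 1) := by
        refine Finset.sum_le_sum fun c1 _ => ?_
        set S := Finset.univ.filter fun c2 : ZMod N × Fin J =>
          ((c2.1 - c1.1).val < Lp ∨ (c1.1 - c2.1).val < Lp) with hS
        have hc1S : c1 ∈ S := by
          simp [hS, Finset.mem_filter, sub_self, ZMod.val_zero, hLp]
        have hsub : (Finset.univ.filter fun c2 : ZMod N × Fin J =>
            c1 ≠ c2 ∧ ((c2.1 - c1.1).val < Lp ∨ (c1.1 - c2.1).val < Lp)) ⊆ S.erase c1 := by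
          intro c2 hc2
          simp only [Finset.mem_filter, Finset.mem_univ, true_and] at hc2
          exact Finset.mem_erase.mpr ⟨hc2.1.symm, by simp [hS, Finset.mem_filter, hc2.2]⟩
        have hScard : S.card = (2 * Lp - 1) * J := by
          have : S = (Finset.univ.filter fun l : ZMod N =>
              (l - c1.1).val < Lp ∨ (c1.1 - l).val < Lp) ×ˢ (Finset.univ : Finset (Fin J)) := by
            ext ⟨l, v⟩
            simp [hS, Finset.mem_product]
          rw [this, Finset.card_product, close_card hLp hN, Finset.card_univ, Fintype.card_fin]
        calc _ ≤ (S.erase c1).card := Finset.card_le_card hsub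
          _ = S.card - 1 := Finset.card_erase_of_mem hc1S
          _ = (2 * Lp - 1) * J - 1 := by rw [hScard]
    _ = N * J * ((2 * Lp - 1) * J - 1) := by
        rw [Finset.sum_const, Finset.card_univ, hcardC, smul_eq_mul]

/-- Welch-type lower bound on the mutual coherence of the global
convolutional dictionary built from a local dictionary `P_L ∈ ℂ^{L_p × J}`:
some pair of distinct columns has correlation at least
`sqrt((J-1)/(J(2L_p-1)-1))`. -/
theorem csc_mutual_coherence_lower_bound (N Lp J : ℕ) [NeZero N]
    (hJ : 1 < J) (hLp : 0 < Lp) (hN : 2 * Lp - 1 ≤ N)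
    (pL : Fin Lp → Fin J → ℂ)
    (col : ZMod N × Fin J → ZMod N → ℂ)
    (hcol : ∀ (k : ZMod N) (u : Fin J), col (k, u) =
      fun i : ZMod N => if hd : (i - k).val < Lp then pL ⟨(i - k).val, hd⟩ u else 0)
    (hnorm : ∀ c : ZMod N × Fin J, ∑ i : ZMod N, ‖col c i‖ ^ 2 = 1) :
    ∃ c1 c2 : ZMod N × Fin J, c1 ≠ c2 ∧
      Real.sqrt (((J : ℝ) - 1) / ((J : ℝ) * (2 * (Lp : ℝ) - 1) - 1)) ≤
        ‖∑ i : ZMod N, (starRingEnd ℂ) (col c1 i) * col c2 i‖ := by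
  classical
  by_contra hcon
  push_neg at hcon
  set q : ℝ := ((J : ℝ) - 1) / ((J : ℝ) * (2 * (Lp : ℝ) - 1) - 1) with hq
  have hn1 : (1 : ℝ) ≤ (N : ℝ) := by
    exact_mod_cast Nat.one_le_iff_ne_zero.mpr (NeZero.ne N)
  have hj2 : (2 : ℝ) ≤ (J : ℝ) := by exact_mod_cast hJ
  have hlp1 : (1 : ℝ) ≤ (Lp : ℝ) := by exact_mod_cast hLp
  have hD1 : (1 : ℝ) ≤ (J : ℝ) * (2 * (Lp : ℝ) - 1) - 1 := by nlinarith
  have hDpos : (0 : ℝ) < (J : ℝ) * (2 * (Lp : ℝ) - 1) - 1 := by linarith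
  have hqnn : 0 ≤ q := div_nonneg (by linarith) (le_of_lt hDpos)
  set F : (ZMod N × Fin J) × (ZMod N × Fin J) → ℝ :=
    fun p => Complex.normSq (∑ i : ZMod N, (starRingEnd ℂ) (col p.1 i) * col p.2 i) with hF
  -- total sum lower bound
  have hframe := frame_bound col hnorm
  have hcardC : (Fintype.card (ZMod N × Fin J) : ℝ) = (N : ℝ) * (J : ℝ) := by
    rw [Fintype.card_prod, ZMod.card, Fintype.card_fin]; push_cast; ring
  have htot : (N : ℝ) * (J : ℝ) ^ 2 ≤ ∑ p : (ZMod N × Fin J) × (ZMod N × Fin J), F p := by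
    have h1 : ∑ p : (ZMod N × Fin J) × (ZMod N × Fin J), F p
        = ∑ c1 : ZMod N × Fin J, ∑ c2 : ZMod N × Fin J,
            Complex.normSq (∑ i : ZMod N, (starRingEnd ℂ) (col c1 i) * col c2 i) := by
      rw [Fintype.sum_prod_type]
    rw [h1]
    refine le_trans ?_ hframe
    rw [hcardC, ZMod.card]
    have heq : ((N : ℝ) * (J : ℝ)) ^ 2 / (N : ℝ) = (N : ℝ) * (J : ℝ) ^ 2 := by
      field_simp
    rw [heq]
  -- diagonal sum
  have hdiagval : ∀ c : ZMod N × Fin J, F (c, c) = 1 := by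
    intro c
    have : (∑ i : ZMod N, (starRingEnd ℂ) (col c i) * col c i)
        = ((∑ i : ZMod N, ‖col c i‖ ^ 2 : ℝ) : ℂ) := by
      push_cast
      refine Finset.sum_congr rfl fun i _ => ?_
      rw [mul_comm, Complex.mul_conj]
      norm_cast
      rw [Complex.normSq_eq_norm_sq]
    simp only [hF, this, hnorm c]
    norm_num
  have hdiagcard : (Finset.univ.filter
      fun p : (ZMod N × Fin J) × (ZMod N × Fin J) => p.1 = p.2).card = N * J := by
    have : (Finset.univ.filter fun p : (ZMod N × Fin J) × (ZMod N × Fin J) => p.1 = p.2)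
        = Finset.univ.diag := by
      ext p
      simp [Finset.mem_diag, Prod.ext_iff]
    rw [this, Finset.diag_card, Finset.card_univ, Fintype.card_prod, ZMod.card,
      Fintype.card_fin]
  -- vanishing of far off-diagonal correlations
  have hvan : ∀ p : (ZMod N × Fin J) × (ZMod N × Fin J),
      ¬((p.2.1 - p.1.1).val < Lp ∨ (p.1.1 - p.2.1).val < Lp) → F p = 0 := by
    rintro ⟨⟨k, u⟩, ⟨l, v⟩⟩ hcl
    push_neg at hcl
    obtain ⟨h1, h2⟩ := hcl
    have h1' : Lp ≤ (l - k).val := h1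
    have h2' : Lp ≤ (k - l).val := h2
    clear h1 h2
    have hLpN : Lp ≤ N := le_trans (by omega) hN
    have hz : (∑ i : ZMod N, (starRingEnd ℂ) (col (k, u) i) * col (l, v) i) = 0 := by
      refine Finset.sum_eq_zero fun i _ => ?_
      simp only [hcol]
      by_cases ha : (i - k).val < Lp
      · by_cases hb : (i - l).val < Lp
        · exfalso
          rcases le_total (i - l).val (i - k).val with hba | hab
          · have heq : l - k = (((i - k).val - (i - l).val : ℕ) : ZMod N) := by
              have h3 : l - k = (i - k) - (i - l) := by
                rw [sub_sub_sub_cancel_left]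
              rw [h3, Nat.cast_sub hba, ZMod.natCast_zmod_val, ZMod.natCast_zmod_val]
            have hv : (l - k).val = (i - k).val - (i - l).val := by
              rw [heq, ZMod.val_cast_of_lt (by omega)]
            omega
          · have heq : k - l = (((i - l).val - (i - k).val : ℕ) : ZMod N) := by
              have h3 : k - l = (i - l) - (i - k) := by
                rw [sub_sub_sub_cancel_left]
              rw [h3, Nat.cast_sub hab, ZMod.natCast_zmod_val, ZMod.natCast_zmod_val]
            have hv : (k - l).val = (i - l).val - (i - k).val := by
              rw [heq, ZMod.val_cast_of_lt (by omega)]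
            omega
        · rw [dif_neg hb, mul_zero]
      · rw [dif_neg ha, map_zero, zero_mul]
    simp only [hF]
    rw [hz, Complex.normSq_zero]
  -- restrict the off-diagonal sum to close pairs
  set T := Finset.univ.filter (fun p : (ZMod N × Fin J) × (ZMod N × Fin J) =>
    p.1 ≠ p.2 ∧ ((p.2.1 - p.1.1).val < Lp ∨ (p.1.1 - p.2.1).val < Lp)) with hT
  have hoff : ∑ p ∈ Finset.univ.filter
      (fun p : (ZMod N × Fin J) × (ZMod N × Fin J) => ¬p.1 = p.2), F p = ∑ p ∈ T, F p := by
    refine (Finset.sum_subset ?_ ?_).symm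
    · intro p hp
      simp only [hT, Finset.mem_filter, Finset.mem_univ, true_and] at hp ⊢
      exact hp.1
    · intro p hp hnp
      simp only [hT, Finset.mem_filter, Finset.mem_univ, true_and] at hp hnp
      exact hvan p (fun hc => hnp ⟨hp, hc⟩)
  have hsplit : ∑ p ∈ Finset.univ.filter
        (fun p : (ZMod N × Fin J) × (ZMod N × Fin J) => p.1 = p.2), F p
      + ∑ p ∈ Finset.univ.filter
        (fun p : (ZMod N × Fin J) × (ZMod N × Fin J) => ¬p.1 = p.2), F p
      = ∑ p : (ZMod N × Fin J) × (ZMod N × Fin J), F p :=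
    Finset.sum_filter_add_sum_filter_not _ _ _
  have hdiagsum : ∑ p ∈ Finset.univ.filter
      (fun p : (ZMod N × Fin J) × (ZMod N × Fin J) => p.1 = p.2), F p = (N : ℝ) * J := by
    have hall : ∀ p ∈ Finset.univ.filter
        (fun p : (ZMod N × Fin J) × (ZMod N × Fin J) => p.1 = p.2), F p = 1 := by
      rintro ⟨p1, p2⟩ hp
      simp only [Finset.mem_filter] at hp
      have hpe : p1 = p2 := hp.2
      subst hpe
      exact hdiagval p1
    rw [Finset.sum_congr rfl hall, Finset.sum_const, hdiagcard, nsmul_eq_mul]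
    push_cast
    ring
  have hTlower : (N : ℝ) * J * ((J : ℝ) - 1) ≤ ∑ p ∈ T, F p := by
    have h0 := htot
    rw [← hsplit, hdiagsum, hoff] at h0
    have hrn : (N : ℝ) * J * ((J : ℝ) - 1) = (N : ℝ) * (J : ℝ) ^ 2 - (N : ℝ) * J := by ring
    linarith
  -- counting upper bound for the number of close off-diagonal pairs
  have hTcard : (T.card : ℝ) ≤ (N : ℝ) * J * ((J : ℝ) * (2 * (Lp : ℝ) - 1) - 1) := by
    have h := T_card (N := N) (Lp := Lp) (J := J) hLp hN
    have hcast : ((N * J * ((2 * Lp - 1) * J - 1) : ℕ) : ℝ)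
        = (N : ℝ) * J * ((J : ℝ) * (2 * (Lp : ℝ) - 1) - 1) := by
      have hn1' : 1 ≤ 2 * Lp := by omega
      have hn2' : 1 ≤ (2 * Lp - 1) * J :=
        Nat.one_le_iff_ne_zero.mpr (Nat.mul_ne_zero (by omega) (by omega))
      push_cast [Nat.cast_sub hn2', Nat.cast_sub hn1']
      ring
    calc (T.card : ℝ) ≤ ((N * J * ((2 * Lp - 1) * J - 1) : ℕ) : ℝ) := by
          rw [hT]; exact_mod_cast h
      _ = _ := hcast
  -- every close off-diagonal correlation is < q by assumption
  have hFlt : ∀ p ∈ T, F p < q := by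
    intro p hp
    simp only [hT, Finset.mem_filter, Finset.mem_univ, true_and] at hp
    have habs := hcon p.1 p.2 hp.1
    have h2 : ‖∑ i : ZMod N, (starRingEnd ℂ) (col p.1 i) * col p.2 i‖ ^ 2
        < Real.sqrt q ^ 2 :=
      pow_lt_pow_left₀ habs (norm_nonneg _) two_ne_zero
    rw [Real.sq_sqrt hqnn] at h2
    simp only [hF, ← Complex.sq_norm]
    exact h2
  have hTne : T.Nonempty := by
    rcases Finset.eq_empty_or_nonempty T with he | hne
    · exfalso
      rw [he, Finset.sum_empty] at hTlower
      nlinarith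
    · exact hne
  have hsumlt : ∑ p ∈ T, F p < (T.card : ℝ) * q := by
    calc ∑ p ∈ T, F p < ∑ _p ∈ T, q := Finset.sum_lt_sum_of_nonempty hTne hFlt
      _ = (T.card : ℝ) * q := by rw [Finset.sum_const, nsmul_eq_mul]
  have hfinal : (T.card : ℝ) * q ≤ (N : ℝ) * J * ((J : ℝ) - 1) := by
    calc (T.card : ℝ) * q
        ≤ ((N : ℝ) * J * ((J : ℝ) * (2 * (Lp : ℝ) - 1) - 1)) * q :=
          mul_le_mul_of_nonneg_right hTcard hqnn
      _ = (N : ℝ) * J * ((J : ℝ) - 1) := by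
          rw [hq]
          field_simp
  linarith
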